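/- arXiv:1703.03605 — 8 statements merged into one kernel-verified Lean document; each statement's English description precedes it below -/
import Mathlib

section
/- Let N ⊆ M be a unital inclusion of von Neumann algebras with faithful normal conditional expectation E : M → N, Jones projection e_N and basic extension M₁. For a family {M_i} ⊆ M, the elements P_i := M_i* e_N M_i are mutually orthogonal projections in M₁ if and only if each q_i := E(M_i M_i*) is a projection in N and E(M_i M_j*) = 0 for all i ≠ j. -/
section Aux
variable {R : Type*} [Ring R] [StarRing R]

lemma pp_aux_idem (q : R) (h3 : q * q * q = q * q) (hsa : star q = q)
    (hC : ∀ x : R, star x * x = 0 → x = 0) : q * q = q := by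
  have h4 : q * (q * (q * q)) = q * q := by
    rw [show q * (q * (q * q)) = q * (q * q * q) by noncomm_ring, h3, ← mul_assoc, h3]
  have h0 : star (q * q - q) * (q * q - q) = 0 := by
    rw [star_sub, star_mul, hsa]
    calc (q * q - q) * (q * q - q)
        = q * (q * (q * q)) - q * (q * q) - q * (q * q) + q * q := by noncomm_ring
      _ = 0 := by rw [h4, ← mul_assoc, h3]; abel
  exact sub_eq_zero.mp (hC _ h0)

lemma pp_aux_eB (e q b : R) (he_sa : star e = e) (hq_sa : star q = q)
    (h0 : e * b * (star b * e) = q * e) (hq_comm : e * q = q * e)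
    (hq_idem : q * q = q)
    (hC : ∀ x : R, x * star x = 0 → x = 0) : e * b = q * (e * b) := by
  have hs : star (e * b - q * (e * b)) = star b * e - star b * e * q := by
    rw [star_sub, star_mul, star_mul, star_mul, he_sa, hq_sa]
  have hqe : q * e * q = q * e := by
    conv_lhs => rw [mul_assoc, hq_comm]
    rw [← mul_assoc, hq_idem]
  have hqqe : q * (q * e) = q * e := by rw [← mul_assoc, hq_idem]
  have h1 : (e * b - q * (e * b)) * star (e * b - q * (e * b)) = 0 := by
    rw [hs]
    calc (e * b - q * (e * b)) * (star b * e - star b * e * q)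
        = (e * b * (star b * e)) - (e * b * (star b * e)) * q
          - q * (e * b * (star b * e)) + q * ((e * b * (star b * e)) * q) := by noncomm_ring
      _ = q * e - q * e * q - q * (q * e) + q * (q * e * q) := by rw [h0]
      _ = 0 := by rw [hqe, hqqe]; abel
  exact sub_eq_zero.mp (hC _ h1)

end Aux

/-- Let `N ⊆ M` be a unital inclusion of von Neumann algebras with a
faithful normal conditional expectation `E : M → N`, Jones projection `e` (implementing `E`
and commuting with `N`, with `n ↦ n * e` injective on `N`).  For a family `{B i} ⊆ M`, the
elements `P i := (B i)* e (B i)` are mutually orthogonal projections (in the basic extension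
`M₁`) if and only if each `q i := E (B i * (B i)*)` is a projection in `N` and
`E (B i * (B j)*) = 0` for all `i ≠ j`. -/
theorem pimsner_popa_orthogonality_equiv
    {H : Type*} [NormedAddCommGroup H] [InnerProductSpace ℂ H] [CompleteSpace H]
    (N M : VonNeumannAlgebra H)
    (hNM : ∀ x : H →L[ℂ] H, x ∈ N → x ∈ M)
    (E : (H →L[ℂ] H) →ₗ[ℂ] (H →L[ℂ] H))
    (hE_range : ∀ m ∈ M, E m ∈ N)
    (hE_id : ∀ n ∈ N, E n = n)
    (hE_star : ∀ m ∈ M, E (star m) = star (E m))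
    (hE_bimod : ∀ n ∈ N, ∀ m ∈ M, ∀ n' ∈ N, E (n * m * n') = n * E m * n')
    (hE_faithful : ∀ m ∈ M, E (star m * m) = 0 → m = 0)
    (e : H →L[ℂ] H)
    (he_sa : star e = e) (he_idem : e * e = e)
    (he_impl : ∀ m ∈ M, e * m * e = E m * e)
    (he_comm : ∀ n ∈ N, e * n = n * e)
    (he_sep : ∀ n ∈ N, n * e = 0 → n = 0)
    {ι : Type*} (B : ι → (H →L[ℂ] H)) (hB : ∀ i, B i ∈ M) :
    ((∀ i, (star (B i) * e * B i) * star (star (B i) * e * B i) = star (B i) * e * B i) ∧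
        (∀ i j, i ≠ j → (star (B i) * e * B i) * (star (B j) * e * B j) = 0))
      ↔ ((∀ i, IsSelfAdjoint (E (B i * star (B i))) ∧
            IsIdempotentElem (E (B i * star (B i)))) ∧
          (∀ i j, i ≠ j → E (B i * star (B j)) = 0)) := by
  have hC1 : ∀ x : H →L[ℂ] H, star x * x = 0 → x = 0 :=
    fun x hx => (CStarRing.star_mul_self_eq_zero_iff x).mp hx
  have hC2 : ∀ x : H →L[ℂ] H, x * star x = 0 → x = 0 :=
    fun x hx => (CStarRing.mul_star_self_eq_zero_iff x).mp hx
  have hBM : ∀ i j, B i * star (B j) ∈ M := fun i j => mul_mem (hB i) (star_mem (hB j))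
  have hcN : ∀ i j, E (B i * star (B j)) ∈ N := fun i j => hE_range _ (hBM i j)
  have hq_comm : ∀ i, e * E (B i * star (B i)) = E (B i * star (B i)) * e :=
    fun i => he_comm _ (hcN i i)
  have hq_sa : ∀ i, star (E (B i * star (B i))) = E (B i * star (B i)) := by
    intro i
    rw [← hE_star _ (hBM i i), star_mul, star_star]
  have himpl : ∀ i j, e * (B i * star (B j)) * e = E (B i * star (B j)) * e :=
    fun i j => he_impl _ (hBM i j)
  have h0 : ∀ i j, e * B i * (star (B j) * e) = E (B i * star (B j)) * e := by
    intro i j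
    rw [← himpl i j]; noncomm_ring
  have key : ∀ i j, (star (B i) * e * B i) * (star (B j) * e * B j)
      = star (B i) * (E (B i * star (B j)) * e) * B j := by
    intro i j
    calc (star (B i) * e * B i) * (star (B j) * e * B j)
        = star (B i) * (e * (B i * star (B j)) * e) * B j := by noncomm_ring
      _ = star (B i) * (E (B i * star (B j)) * e) * B j := by rw [himpl]
  have hPstar : ∀ i, star (star (B i) * e * B i) = star (B i) * e * B i := by
    intro i
    simp only [star_mul, star_star, he_sa, mul_assoc]
  -- right bimodule property: E (m * n) = E m * n for m ∈ M, n ∈ N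
  have hbimodR : ∀ m ∈ M, ∀ n ∈ N, E (m * n) = E m * n := by
    intro m hm n hn
    have := hE_bimod 1 N.one_mem m hm n hn
    simpa using this
  constructor
  · rintro ⟨h1, h2⟩
    have h1' : ∀ i, (star (B i) * e * B i) * (star (B i) * e * B i) = star (B i) * e * B i := by
      intro i
      have := h1 i
      rwa [hPstar i] at this
    have hPP : ∀ i, star (B i) * (E (B i * star (B i)) * e) * B i = star (B i) * e * B i :=
      fun i => (key i i).symm.trans (h1' i)
    -- derive q³ = q²
    have h3 : ∀ i, E (B i * star (B i)) * E (B i * star (B i)) * E (B i * star (B i))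
        = E (B i * star (B i)) * E (B i * star (B i)) := by
      intro i
      set q := E (B i * star (B i)) with hqdef
      have hmqM : B i * star (B i) * q ∈ M := mul_mem (hBM i i) (hNM _ (hcN i i))
      have himq : e * (B i * star (B i) * q) * e = q * q * e := by
        rw [he_impl _ hmqM, hbimodR _ (hBM i i) _ (hcN i i)]
      have hm := congrArg (fun z => e * B i * z * (star (B i) * e)) (hPP i)
      have hL : e * B i * (star (B i) * (q * e) * B i) * (star (B i) * e)
          = q * q * (q * e) := by
        calc e * B i * (star (B i) * (q * e) * B i) * (star (B i) * e)
            = (e * (B i * star (B i) * q) * e) * (B i * star (B i)) * e := by noncomm_ring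
          _ = (q * q * e) * (B i * star (B i)) * e := by rw [himq]
          _ = q * q * (e * (B i * star (B i)) * e) := by noncomm_ring
          _ = q * q * (q * e) := by rw [himpl i i]
      have hR : e * B i * (star (B i) * e * B i) * (star (B i) * e) = q * (q * e) := by
        calc e * B i * (star (B i) * e * B i) * (star (B i) * e)
            = (e * (B i * star (B i)) * e) * (B i * star (B i)) * e := by noncomm_ring
          _ = (q * e) * (B i * star (B i)) * e := by rw [himpl i i]
          _ = q * (e * (B i * star (B i)) * e) := by noncomm_ring
          _ = q * (q * e) := by rw [himpl i i]
      have heq : q * q * (q * e) = q * (q * e) := by rw [← hL, ← hR]; exact hm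
      have hz : (q * q * q - q * q) * e = 0 := by
        rw [sub_mul]
        calc q * q * q * e - q * q * e = q * q * (q * e) - q * (q * e) := by noncomm_ring
          _ = 0 := by rw [heq]; abel
      have hmem : q * q * q - q * q ∈ N :=
        sub_mem (mul_mem (mul_mem (hcN i i) (hcN i i)) (hcN i i)) (mul_mem (hcN i i) (hcN i i))
      have := he_sep _ hmem hz
      exact sub_eq_zero.mp this
    have hidem : ∀ i, E (B i * star (B i)) * E (B i * star (B i)) = E (B i * star (B i)) :=
      fun i => pp_aux_idem _ (h3 i) (hq_sa i) hC1
    have heB : ∀ i, e * B i = E (B i * star (B i)) * (e * B i) :=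
      fun i => pp_aux_eB e _ (B i) he_sa (hq_sa i) (h0 i i) (hq_comm i) (hidem i) hC2
    refine ⟨fun i => ⟨hq_sa i, hidem i⟩, fun i j hij => ?_⟩
    -- orthogonality
    set c := E (B i * star (B j)) with hcdef
    set qi := E (B i * star (B i)) with hqidef
    set qj := E (B j * star (B j)) with hqjdef
    have hP0 : star (B i) * (c * e) * B j = 0 := by
      rw [← key i j]; exact h2 i j hij
    have hm := congrArg (fun z => e * B i * z * (star (B j) * e)) hP0
    simp only [mul_zero, zero_mul] at hm
    -- e Bi Bi* c e Bj Bj* e = qi * c * (qj * e)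
    have hmcM : B i * star (B i) * c ∈ M := mul_mem (hBM i i) (hNM _ (hcN i j))
    have himc : e * (B i * star (B i) * c) * e = qi * c * e := by
      rw [he_impl _ hmcM, hbimodR _ (hBM i i) _ (hcN i j)]
    have hL : e * B i * (star (B i) * (c * e) * B j) * (star (B j) * e)
        = qi * c * (qj * e) := by
      calc e * B i * (star (B i) * (c * e) * B j) * (star (B j) * e)
          = (e * (B i * star (B i) * c) * e) * (B j * star (B j)) * e := by noncomm_ring
        _ = (qi * c * e) * (B j * star (B j)) * e := by rw [himc]
        _ = qi * c * (e * (B j * star (B j)) * e) := by noncomm_ring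
        _ = qi * c * (qj * e) := by rw [himpl j j]
    have hqcq : qi * c * (qj * e) = 0 := by rw [← hL]; exact hm
    -- c * e = qi * c * (qj * e)
    have hBje : star (B j) * e = star (B j) * e * qj := by
      have h := congrArg star (heB j)
      rw [star_mul, star_mul, star_mul, he_sa, hq_sa j, ← hqjdef] at h
      exact h
    have hce : c * e = qi * c * (qj * e) := by
      calc c * e = e * B i * (star (B j) * e) := (h0 i j).symm
        _ = qi * (e * B i) * (star (B j) * e * qj) := by rw [← heB i, ← hBje]
        _ = qi * (e * B i * (star (B j) * e)) * qj := by noncomm_ring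
        _ = qi * (c * e) * qj := by rw [h0 i j]
        _ = qi * c * (e * qj) := by noncomm_ring
        _ = qi * c * (qj * e) := by rw [he_comm _ (hcN j j)]
    have : c * e = 0 := hce.trans hqcq
    exact he_sep _ (hcN i j) this
  · rintro ⟨hq, hc⟩
    have heB : ∀ i, e * B i = E (B i * star (B i)) * (e * B i) :=
      fun i => pp_aux_eB e _ (B i) he_sa (hq i).1 (h0 i i) (hq_comm i) (hq i).2 hC2
    constructor
    · intro i
      rw [hPstar i, key i i]
      calc star (B i) * (E (B i * star (B i)) * e) * B i
          = star (B i) * (E (B i * star (B i)) * (e * B i)) := by noncomm_ring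
        _ = star (B i) * (e * B i) := by rw [← heB i]
        _ = star (B i) * e * B i := by rw [mul_assoc]
    · intro i j hij
      rw [key i j, hc i j hij, zero_mul, mul_zero, zero_mul]
end

section
/- If {M_i} is a Pimsner–Popa basis for N ⊆ M with respect to E, and for each i one chooses partial isometries a_i^j ∈ N with Σ_j a_i^j (a_i^j)* = E(M_i M_i*), then the cut family {(a_i^j)* M_i} (indexed by pairs (i,j)) is again a Pimsner–Popa basis for N ⊆ M with respect to E. -/
open scoped InnerProductSpace

/-- `{B i}` is a Pimsner–Popa basis for an inclusion with Jones projection `e`: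
the `P i := (B i)* e (B i)` are mutually orthogonal projections summing strongly to `1`. -/
def IsPiPoBasis {H : Type*} [NormedAddCommGroup H] [InnerProductSpace ℂ H]
    [CompleteSpace H] (e : H →L[ℂ] H) {ι : Type*} (B : ι → (H →L[ℂ] H)) : Prop :=
  (∀ i, (star (B i) * e * B i) * star (star (B i) * e * B i) = star (B i) * e * B i) ∧
  (∀ i j, i ≠ j → (star (B i) * e * B i) * (star (B j) * e * B j) = 0) ∧
  (∀ ξ : H, HasSum (fun i => (star (B i) * e * B i) ξ) ξ)

private lemma sa_inner {H : Type*} [NormedAddCommGroup H] [InnerProductSpace ℂ H]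
    [CompleteSpace H] {T : H →L[ℂ] H} (h : star T = T) (x y : H) :
    ⟪T x, y⟫_ℂ = ⟪x, T y⟫_ℂ := by
  rw [ContinuousLinearMap.star_eq_adjoint] at h
  conv_lhs => rw [← h]
  rw [ContinuousLinearMap.adjoint_inner_left]

/-- a family of pairwise-orthogonal vectors with summable squared norms is summable. -/
private lemma summable_of_orth {H : Type*} [NormedAddCommGroup H] [InnerProductSpace ℂ H]
    [CompleteSpace H] {ι : Type*} {v : ι → H}
    (ho : Pairwise fun p q => ⟪v p, v q⟫_ℂ = 0)
    (hs : Summable fun p => (‖v p‖ : ℝ) ^ 2) : Summable v := by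
  classical
  set G : ι → Submodule ℂ H := fun p => ℂ ∙ v p with hG
  have hV : OrthogonalFamily ℂ (fun p => G p) (fun p => (G p).subtypeₗᵢ) := by
    intro p q hpq x y
    obtain ⟨c, hc⟩ := Submodule.mem_span_singleton.mp x.2
    obtain ⟨d, hd⟩ := Submodule.mem_span_singleton.mp y.2
    have hx : ((G p).subtypeₗᵢ x : H) = c • v p := hc.symm
    have hy : ((G q).subtypeₗᵢ y : H) = d • v q := hd.symm
    rw [hx, hy, inner_smul_left, inner_smul_right, ho hpq, mul_zero, mul_zero]
  have key := (hV.summable_iff_norm_sq_summable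
    (fun p => ⟨v p, Submodule.mem_span_singleton_self _⟩)).mpr
  have : Summable fun p => ((G p).subtypeₗᵢ (⟨v p, Submodule.mem_span_singleton_self _⟩ : G p)) :=
    key (by simpa using hs)
  simpa using this

/-- Cutting a Pimsner–Popa basis: if `{B i}` is a Pimsner–Popa basis for
`N ⊆ M` with respect to `E` and, for each `i`, `a i j ∈ N` are partial isometries with
`∑ j, (a i j)(a i j)* = E (B i (B i)*)` (strongly), then the family
`{(a i j)* * B i}` indexed by pairs is again a Pimsner–Popa basis. -/
theorem pimsner_popa_basis_cutting
    {H : Type*} [NormedAddCommGroup H] [InnerProductSpace ℂ H] [CompleteSpace H]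
    (N M : VonNeumannAlgebra H)
    (hNM : ∀ x : H →L[ℂ] H, x ∈ N → x ∈ M)
    (E : (H →L[ℂ] H) →ₗ[ℂ] (H →L[ℂ] H))
    (hE_range : ∀ m ∈ M, E m ∈ N)
    (hE_id : ∀ n ∈ N, E n = n)
    (hE_star : ∀ m ∈ M, E (star m) = star (E m))
    (hE_bimod : ∀ n ∈ N, ∀ m ∈ M, ∀ n' ∈ N, E (n * m * n') = n * E m * n')
    (hE_faithful : ∀ m ∈ M, E (star m * m) = 0 → m = 0)
    (e : H →L[ℂ] H)
    (he_sa : star e = e) (he_idem : e * e = e)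
    (he_impl : ∀ m ∈ M, e * m * e = E m * e)
    (he_comm : ∀ n ∈ N, e * n = n * e)
    (he_sep : ∀ n ∈ N, n * e = 0 → n = 0)
    {ι : Type*} (B : ι → (H →L[ℂ] H)) (hB : ∀ i, B i ∈ M)
    (hbasis : IsPiPoBasis e B)
    {κ : ι → Type*} (a : ∀ i, κ i → (H →L[ℂ] H))
    (haN : ∀ i (j : κ i), a i j ∈ N)
    (ha_pisom : ∀ i (j : κ i), a i j * star (a i j) * a i j = a i j)
    (ha_sum : ∀ i (ξ : H),
      HasSum (fun j : κ i => (a i j * star (a i j)) ξ) ((E (B i * star (B i))) ξ)) :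
    IsPiPoBasis e (fun p : Σ i, κ i => star (a p.1 p.2) * B p.1) := by
  classical
  obtain ⟨hP, hPo, hPs⟩ := hbasis
  -- memberships
  have hkM : ∀ i i', B i * star (B i') ∈ M := fun i i' => mul_mem (hB i) (star_mem (hB i'))
  have hEc : ∀ i i', E (B i * star (B i')) ∈ N := fun i i' => hE_range _ (hkM i i')
  have hgN : ∀ i (j : κ i), a i j * star (a i j) ∈ N :=
    fun i j => mul_mem (haN i j) (star_mem (haN i j))
  -- star facts
  have hf_star : ∀ i, star (E (B i * star (B i))) = E (B i * star (B i)) := by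
    intro i
    rw [← hE_star _ (hkM i i)]
    congr 1
    simp [star_mul]
  have hg_star : ∀ i (j : κ i), star (a i j * star (a i j)) = a i j * star (a i j) := by
    intro i j; simp [star_mul]
  have hg_idem : ∀ i (j : κ i),
      (a i j * star (a i j)) * (a i j * star (a i j)) = a i j * star (a i j) := by
    intro i j
    rw [← mul_assoc, ha_pisom i j]
  -- idempotency of P (both-sides version)
  have hPP : ∀ i, (star (B i) * e * B i) * (star (B i) * e * B i) = star (B i) * e * B i := by
    intro i
    have hPstar : star (star (B i) * e * B i) = star (B i) * e * B i := by
      simp [star_mul, he_sa, mul_assoc]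
    have h := hP i
    rwa [hPstar] at h
  -- sandwich helpers
  have hsandt : ∀ i i', e * (B i * (star (B i') * e)) = E (B i * star (B i')) * e := by
    intro i i'
    simpa only [mul_assoc] using he_impl _ (hkM i i')
  have hsand : ∀ i i' (x : H →L[ℂ] H),
      e * (B i * (star (B i') * (e * x))) = E (B i * star (B i')) * (e * x) := by
    intro i i' x
    have h := congrArg (· * x) (he_impl _ (hkM i i'))
    simpa only [mul_assoc] using h
  have himplG : ∀ i i' (j' : κ i') (x : H →L[ℂ] H),
      e * (B i * (star (B i') * (a i' j' * (star (a i' j') * (e * x)))))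
        = E (B i * star (B i')) * (a i' j' * (star (a i' j') * (e * x))) := by
    intro i i' j' x
    have hm : B i * star (B i') * (a i' j' * star (a i' j')) ∈ M :=
      mul_mem (hkM i i') (hNM _ (hgN i' j'))
    have h1 := he_impl _ hm
    have h2 : E (B i * star (B i') * (a i' j' * star (a i' j')))
        = E (B i * star (B i')) * (a i' j' * star (a i' j')) := by
      have := hE_bimod 1 (one_mem _) _ (hkM i i') _ (hgN i' j')
      simpa using this
    rw [h2] at h1
    have h3 := congrArg (· * x) h1
    simpa only [mul_assoc] using h3
  -- f := E(B i B i *) is a projection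
  have hf3e : ∀ i, E (B i * star (B i)) * (E (B i * star (B i)) * (E (B i * star (B i)) * e))
      = E (B i * star (B i)) * (E (B i * star (B i)) * e) := by
    intro i
    have h0 := congrArg (fun y => e * (B i * (y * (star (B i) * e)))) (hPP i)
    simp only [mul_assoc] at h0
    rw [hsand i i, hsand i i, hsandt i i] at h0
    exact h0
  have hf3 : ∀ i, E (B i * star (B i)) * E (B i * star (B i)) * E (B i * star (B i))
      = E (B i * star (B i)) * E (B i * star (B i)) := by
    intro i
    have h3 : (E (B i * star (B i)) * E (B i * star (B i)) * E (B i * star (B i))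
        - E (B i * star (B i)) * E (B i * star (B i))) * e = 0 := by
      rw [sub_mul]
      rw [show E (B i * star (B i)) * E (B i * star (B i)) * E (B i * star (B i)) * e
          = E (B i * star (B i)) * (E (B i * star (B i)) * (E (B i * star (B i)) * e)) by
            simp only [mul_assoc]]
      rw [show E (B i * star (B i)) * E (B i * star (B i)) * e
          = E (B i * star (B i)) * (E (B i * star (B i)) * e) by simp only [mul_assoc]]
      rw [hf3e i, sub_self]
    have hmem : E (B i * star (B i)) * E (B i * star (B i)) * E (B i * star (B i))
        - E (B i * star (B i)) * E (B i * star (B i)) ∈ N :=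
      sub_mem (mul_mem (mul_mem (hEc i i) (hEc i i)) (hEc i i)) (mul_mem (hEc i i) (hEc i i))
    exact sub_eq_zero.mp (he_sep _ hmem h3)
  have hf2 : ∀ i, E (B i * star (B i)) * E (B i * star (B i)) = E (B i * star (B i)) := by
    intro i
    have h4 : E (B i * star (B i)) * E (B i * star (B i))
        * (E (B i * star (B i)) * E (B i * star (B i)))
        = E (B i * star (B i)) * E (B i * star (B i)) := by
      calc E (B i * star (B i)) * E (B i * star (B i))
            * (E (B i * star (B i)) * E (B i * star (B i)))
          = E (B i * star (B i)) * E (B i * star (B i)) * E (B i * star (B i))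
            * E (B i * star (B i)) := by rw [← mul_assoc]
        _ = E (B i * star (B i)) * E (B i * star (B i)) * E (B i * star (B i)) := by
            conv_lhs => rw [hf3 i]
        _ = E (B i * star (B i)) * E (B i * star (B i)) := hf3 i
    have hsq : (E (B i * star (B i)) * E (B i * star (B i)) - E (B i * star (B i)))
        * (E (B i * star (B i)) * E (B i * star (B i)) - E (B i * star (B i))) = 0 := by
      have hexp : (E (B i * star (B i)) * E (B i * star (B i)) - E (B i * star (B i)))
          * (E (B i * star (B i)) * E (B i * star (B i)) - E (B i * star (B i)))
          = E (B i * star (B i)) * E (B i * star (B i))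
              * (E (B i * star (B i)) * E (B i * star (B i)))
            - E (B i * star (B i)) * E (B i * star (B i)) * E (B i * star (B i))
            - (E (B i * star (B i)) * (E (B i * star (B i)) * E (B i * star (B i)))
              - E (B i * star (B i)) * E (B i * star (B i))) := by noncomm_ring
      rw [hexp, h4, hf3 i, show E (B i * star (B i))
          * (E (B i * star (B i)) * E (B i * star (B i)))
          = E (B i * star (B i)) * E (B i * star (B i)) * E (B i * star (B i)) from
          (mul_assoc _ _ _).symm, hf3 i]
      abel
    have hstar : star (E (B i * star (B i)) * E (B i * star (B i)) - E (B i * star (B i)))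
        = E (B i * star (B i)) * E (B i * star (B i)) - E (B i * star (B i)) := by
      rw [star_sub, star_mul, hf_star i]
    have h0 := (CStarRing.star_mul_self_eq_zero_iff
      (E (B i * star (B i)) * E (B i * star (B i)) - E (B i * star (B i)))).mp
      (by rw [hstar]; exact hsq)
    exact sub_eq_zero.mp h0
  -- the sum of inner products
  have hsum_inner : ∀ i (η : H),
      HasSum (fun j : κ i => (‖(a i j * star (a i j)) η‖ : ℝ) ^ 2)
        (Complex.re ⟪η, (E (B i * star (B i))) η⟫_ℂ) := by
    intro i η
    have h0 := (innerSL ℂ η).hasSum (ha_sum i η)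
    have h1 := Complex.reCLM.hasSum h0
    have hterm : ∀ j : κ i, Complex.reCLM ((innerSL ℂ η) ((a i j * star (a i j)) η))
        = (‖(a i j * star (a i j)) η‖ : ℝ) ^ 2 := by
      intro j
      have hv : ⟪η, (a i j * star (a i j)) η⟫_ℂ
          = ⟪(a i j * star (a i j)) η, (a i j * star (a i j)) η⟫_ℂ := by
        conv_lhs => rw [show (a i j * star (a i j)) η
          = ((a i j * star (a i j)) * (a i j * star (a i j))) η by rw [hg_idem i j]]
        rw [ContinuousLinearMap.mul_apply, ← sa_inner (hg_star i j)]
      show Complex.re ⟪η, (a i j * star (a i j)) η⟫_ℂ = _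
      rw [hv]
      simpa using inner_self_eq_norm_sq (𝕜 := ℂ) ((a i j * star (a i j)) η)
    rw [show (fun j : κ i => (‖(a i j * star (a i j)) η‖ : ℝ) ^ 2)
        = fun j : κ i => Complex.reCLM ((innerSL ℂ η) ((a i j * star (a i j)) η)) from
        funext fun j => (hterm j).symm]
    exact h1
  -- g f = g and f g = g
  have hgf_apply : ∀ i (j : κ i) (η : H), (a i j * star (a i j)) η
      = (a i j * star (a i j)) ((E (B i * star (B i))) η) := by
    intro i j η
    have hζ : (E (B i * star (B i))) (η - (E (B i * star (B i))) η) = 0 := by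
      rw [map_sub]
      rw [show (E (B i * star (B i))) ((E (B i * star (B i))) η) = (E (B i * star (B i))) η from
        congrArg (fun T : H →L[ℂ] H => T η) (hf2 i)]
      exact sub_self _
    have hle := le_hasSum (hsum_inner i (η - (E (B i * star (B i))) η)) j
      (fun _ _ => sq_nonneg _)
    rw [hζ] at hle
    simp only [inner_zero_right, Complex.zero_re] at hle
    have h0 : (a i j * star (a i j)) (η - (E (B i * star (B i))) η) = 0 := by
      have h1 : (‖(a i j * star (a i j)) (η - (E (B i * star (B i))) η)‖ : ℝ) ^ 2 = 0 :=
        le_antisymm hle (sq_nonneg _)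
      exact norm_eq_zero.mp (pow_eq_zero_iff (two_ne_zero) |>.mp h1)
    rw [map_sub] at h0
    exact (sub_eq_zero.mp h0)
  have hgf_r : ∀ i (j : κ i),
      (a i j * star (a i j)) * E (B i * star (B i)) = a i j * star (a i j) := by
    intro i j
    ext η
    exact (hgf_apply i j η).symm
  have hgf_l : ∀ i (j : κ i),
      E (B i * star (B i)) * (a i j * star (a i j)) = a i j * star (a i j) := by
    intro i j
    have h := congrArg star (hgf_r i j)
    rwa [star_mul, hg_star i j, hf_star i] at h
  -- same-fiber orthogonality of the g's
  have hgg : ∀ i (j j' : κ i), j ≠ j' →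
      (a i j * star (a i j)) * (a i j' * star (a i j')) = 0 := by
    intro i j j' hjj
    ext ξ
    have hsum := sum_le_hasSum ({j, j'} : Finset (κ i)) (fun _ _ => sq_nonneg _)
      (hsum_inner i ((a i j' * star (a i j')) ξ))
    rw [Finset.sum_pair hjj] at hsum
    have e1 : (a i j' * star (a i j')) ((a i j' * star (a i j')) ξ)
        = (a i j' * star (a i j')) ξ :=
      congrArg (fun T : H →L[ℂ] H => T ξ) (hg_idem i j')
    have e2 : (E (B i * star (B i))) ((a i j' * star (a i j')) ξ)
        = (a i j' * star (a i j')) ξ :=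
      congrArg (fun T : H →L[ℂ] H => T ξ) (hgf_l i j')
    rw [e1, e2] at hsum
    rw [show Complex.re ⟪(a i j' * star (a i j')) ξ, (a i j' * star (a i j')) ξ⟫_ℂ
        = (‖(a i j' * star (a i j')) ξ‖ : ℝ) ^ 2 from by
      simpa using inner_self_eq_norm_sq (𝕜 := ℂ) ((a i j' * star (a i j')) ξ)] at hsum
    have hle : (‖(a i j * star (a i j)) ((a i j' * star (a i j')) ξ)‖ : ℝ) ^ 2 ≤ 0 := by
      linarith
    have h0 : (a i j * star (a i j)) ((a i j' * star (a i j')) ξ) = 0 :=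
      norm_eq_zero.mp (pow_eq_zero_iff (two_ne_zero) |>.mp (le_antisymm hle (sq_nonneg _)))
    rw [ContinuousLinearMap.mul_apply, ContinuousLinearMap.zero_apply]
    exact h0
  -- cross identity for distinct i
  have hcross : ∀ i i', i ≠ i' → E (B i * star (B i))
      * (E (B i * star (B i')) * E (B i' * star (B i'))) = 0 := by
    intro i i' hii
    have h0 := congrArg (fun y => e * (B i * (y * (star (B i') * e)))) (hPo i i' hii)
    simp only [mul_assoc, zero_mul, mul_zero] at h0
    rw [hsand i i, hsand i i', hsandt i' i'] at h0
    have h1 : (E (B i * star (B i)) * (E (B i * star (B i')) * E (B i' * star (B i')))) * e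
        = 0 := by
      simpa only [mul_assoc] using h0
    exact he_sep _ (mul_mem (hEc i i) (mul_mem (hEc i i') (hEc i' i'))) h1
  -- the cut operators
  set Q : ∀ i, κ i → (H →L[ℂ] H) :=
    fun i j => star (B i) * (a i j * (star (a i j) * (e * B i))) with hQdef
  have hcommN : ∀ n, n ∈ N → ∀ x : H →L[ℂ] H, e * (n * x) = n * (e * x) := by
    intro n hn x
    rw [← mul_assoc, he_comm n hn, mul_assoc]
  have hQeq : ∀ i (j : κ i),
      star (star (a i j) * B i) * e * (star (a i j) * B i) = Q i j := by
    intro i j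
    rw [hQdef]
    simp only [star_mul, star_star, mul_assoc]
    rw [hcommN (star (a i j)) (star_mem (haN i j))]
  have hQsa : ∀ i (j : κ i), star (Q i j) = Q i j := by
    intro i j
    rw [← hQeq i j]
    simp [star_mul, star_star, he_sa, mul_assoc]
  have hQmul : ∀ i (j : κ i) i' (j' : κ i'), Q i j * Q i' j'
      = star (B i) * (a i j * (star (a i j) * (E (B i * star (B i'))
        * (a i' j' * (star (a i' j') * (e * B i')))))) := by
    intro i j i' j'
    rw [hQdef]
    simp only [mul_assoc]
    rw [himplG i i' j' (B i')]
  -- pairwise products of the Q's vanish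
  have hQorth : ∀ p q : Σ i, κ i, p ≠ q → Q p.1 p.2 * Q q.1 q.2 = 0 := by
    rintro ⟨i, j⟩ ⟨i', j'⟩ hne
    rw [hQmul i j i' j']
    by_cases hii : i = i'
    · subst hii
      have hjj : j ≠ j' := fun h => hne (by rw [h])
      have hb : (a i j * star (a i j)) * (E (B i * star (B i)) * (a i j' * star (a i j')))
          = 0 := by
        rw [hgf_l i j']
        exact hgg i j j' hjj
      have h1 := congrArg (· * (e * B i)) hb
      simp only [mul_assoc, zero_mul] at h1
      rw [h1, mul_zero]
    · have hb : (a i j * star (a i j)) * (E (B i * star (B i')) * (a i' j' * star (a i' j')))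
          = 0 := by
        rw [show (a i j * star (a i j)) * (E (B i * star (B i')) * (a i' j' * star (a i' j')))
            = ((a i j * star (a i j)) * E (B i * star (B i)))
              * (E (B i * star (B i')) * (E (B i' * star (B i'))
                * (a i' j' * star (a i' j')))) by rw [hgf_r i j, hgf_l i' j']]
        rw [show ((a i j * star (a i j)) * E (B i * star (B i)))
            * (E (B i * star (B i')) * (E (B i' * star (B i'))
              * (a i' j' * star (a i' j'))))
            = (a i j * star (a i j)) * ((E (B i * star (B i)) * (E (B i * star (B i'))
              * E (B i' * star (B i')))) * (a i' j' * star (a i' j'))) by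
          simp only [mul_assoc]]
        rw [hcross i i' hii, zero_mul, mul_zero]
      have h1 := congrArg (· * (e * B i')) hb
      simp only [mul_assoc, zero_mul] at h1
      rw [h1, mul_zero]
  -- the Q's are projections
  have hQQ : ∀ i (j : κ i), Q i j * Q i j = Q i j := by
    intro i j
    have h := hQmul i j i j
    have hb : (a i j * star (a i j)) * (E (B i * star (B i)) * (a i j * star (a i j)))
        = a i j * star (a i j) := by
      rw [hgf_l i j]
      exact hg_idem i j
    have h2 := congrArg (· * (e * B i)) hb
    simp only [mul_assoc] at h2
    rw [h2] at h
    rw [h, hQdef]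
  refine ⟨?_, ?_, ?_⟩
  · rintro ⟨i, j⟩
    show (star (star (a i j) * B i) * e * (star (a i j) * B i))
      * star (star (star (a i j) * B i) * e * (star (a i j) * B i))
      = star (star (a i j) * B i) * e * (star (a i j) * B i)
    rw [hQeq i j, hQsa i j]
    exact hQQ i j
  · rintro ⟨i, j⟩ ⟨i', j'⟩ hne
    show (star (star (a i j) * B i) * e * (star (a i j) * B i))
      * (star (star (a i' j') * B i') * e * (star (a i' j') * B i')) = 0
    rw [hQeq i j, hQeq i' j']
    exact hQorth ⟨i, j⟩ ⟨i', j'⟩ hne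
  · intro ξ
    have hop : ∀ i, star (B i) * (E (B i * star (B i)) * (e * B i)) = star (B i) * e * B i := by
      intro i
      rw [← hsand i i (B i)]
      simp only [mul_assoc]
      have h := hPP i
      simp only [mul_assoc] at h
      exact h
    have hfib : ∀ i, HasSum (fun j : κ i => (Q i j) ξ) ((star (B i) * e * B i) ξ) := by
      intro i
      have h1 := (star (B i)).hasSum (ha_sum i (e (B i ξ)))
      have h2 : HasSum (fun j : κ i => (Q i j) ξ)
          ((star (B i) * (E (B i * star (B i)) * (e * B i))) ξ) := by
        simp only [hQdef]
        exact h1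
      rwa [hop i] at h2
    have hQ_applied_sq : ∀ (p : Σ i, κ i),
        Complex.re ⟪ξ, (Q p.1 p.2) ξ⟫_ℂ = (‖(Q p.1 p.2) ξ‖ : ℝ) ^ 2 := by
      intro p
      have hv : ⟪ξ, (Q p.1 p.2) ξ⟫_ℂ = ⟪(Q p.1 p.2) ξ, (Q p.1 p.2) ξ⟫_ℂ := by
        conv_lhs => rw [show (Q p.1 p.2) ξ = (Q p.1 p.2 * Q p.1 p.2) ξ by rw [hQQ p.1 p.2]]
        rw [ContinuousLinearMap.mul_apply, ← sa_inner (hQsa p.1 p.2)]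
      rw [hv]
      simpa using inner_self_eq_norm_sq (𝕜 := ℂ) ((Q p.1 p.2) ξ)
    have houter_sq : HasSum (fun i => Complex.re ⟪ξ, (star (B i) * e * B i) ξ⟫_ℂ)
        ((‖ξ‖ : ℝ) ^ 2) := by
      have h1 := Complex.reCLM.hasSum ((innerSL ℂ ξ).hasSum (hPs ξ))
      rw [show (Complex.reCLM ((innerSL ℂ ξ) ξ)) = (‖ξ‖ : ℝ) ^ 2 from by
        simpa using inner_self_eq_norm_sq (𝕜 := ℂ) ξ] at h1
      exact h1
    have hfib_sq : ∀ i, HasSum (fun j : κ i => (‖(Q i j) ξ‖ : ℝ) ^ 2)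
        (Complex.re ⟪ξ, (star (B i) * e * B i) ξ⟫_ℂ) := by
      intro i
      have h1 := Complex.reCLM.hasSum ((innerSL ℂ ξ).hasSum (hfib i))
      rw [show (fun j : κ i => Complex.reCLM ((innerSL ℂ ξ) ((Q i j) ξ)))
          = fun j : κ i => (‖(Q i j) ξ‖ : ℝ) ^ 2 from
          funext fun j => hQ_applied_sq ⟨i, j⟩] at h1
      exact h1
    have hsummable_sq : Summable (fun p : Σ i, κ i => (‖(Q p.1 p.2) ξ‖ : ℝ) ^ 2) := by
      refine (summable_sigma_of_nonneg (fun p => sq_nonneg _)).mpr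
        ⟨fun i => (hfib_sq i).summable, ?_⟩
      rw [show (fun i => ∑' j : κ i, (‖(Q i j) ξ‖ : ℝ) ^ 2)
          = fun i => Complex.re ⟪ξ, (star (B i) * e * B i) ξ⟫_ℂ from
          funext fun i => (hfib_sq i).tsum_eq]
      exact houter_sq.summable
    have horth : Pairwise fun p q : Σ i, κ i => ⟪(Q p.1 p.2) ξ, (Q q.1 q.2) ξ⟫_ℂ = 0 := by
      intro p q hpq
      have h0 := hQorth p q hpq
      calc ⟪(Q p.1 p.2) ξ, (Q q.1 q.2) ξ⟫_ℂ
          = ⟪ξ, (Q p.1 p.2) ((Q q.1 q.2) ξ)⟫_ℂ := sa_inner (hQsa p.1 p.2) ξ ((Q q.1 q.2) ξ)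
        _ = ⟪ξ, (Q p.1 p.2 * Q q.1 q.2) ξ⟫_ℂ := rfl
        _ = 0 := by rw [h0]; simp
    have hsummable : Summable (fun p : Σ i, κ i => (Q p.1 p.2) ξ) :=
      summable_of_orth horth hsummable_sq
    have hmain : HasSum (fun p : Σ i, κ i => (Q p.1 p.2) ξ) ξ :=
      HasSum.sigma_of_hasSum (hPs ξ) (fun i => hfib i) hsummable
    show HasSum (fun p : Σ i, κ i =>
      (star (star (a p.1 p.2) * B p.1) * e * (star (a p.1 p.2) * B p.1)) ξ) ξ
    rw [show (fun p : Σ i, κ i =>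
        (star (star (a p.1 p.2) * B p.1) * e * (star (a p.1 p.2) * B p.1)) ξ)
        = fun p : Σ i, κ i => (Q p.1 p.2) ξ from
        funext fun p => congrArg (fun T : H →L[ℂ] H => T ξ) (hQeq p.1 p.2)]
    exact hmain
end

section
/- Let (θ^A, w^A, {m^A_i}) and (θ^B, w^B, {m^B_j}) be generalized Q-systems of intertwiners in a braided C*-tensor subcategory C ⊆ End(N) with braiding ε. Define the braided product elements m^A_i ×_ε^± m^B_j := θ^A(ε^±_{θ^A,θ^B}) m^A_i θ^A(m^B_j). Then the projections p^{AB,±}_{i,j} := (m^A_i ×_ε^± m^B_j)* w^A w^B (w^B)*(w^A)* (m^A_i ×_ε^± m^B_j) satisfy p^{AB,±}_{i,j} = p^A_i · θ^A(p^B_j) = θ^A(p^B_j) · p^A_i, where p^A_i := (m^A_i)* w^A (w^A)* m^A_i and p^B_j := (m^B_j)* w^B (w^B)* m^B_j. -/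
/-- The identity *-endomorphism. -/
def idEnd (A : Type*) [Semiring A] [StarRing A] [Algebra ℂ A] : A →⋆ₐ[ℂ] A :=
  { AlgHom.id ℂ A with map_star' := fun _ => rfl }

/-- A braiding on the C*-tensor category of *-endomorphisms of `A`: a family of unitaries
`eps ρ σ ∈ Hom(ρσ, σρ)` which is natural in both variables, tensorial (hexagon identities)
and trivial on the identity.  Both the DHR braiding `ε⁺` and its opposite `ε⁻` satisfy
these axioms. -/
structure Braiding (A : Type*) [Ring A] [StarRing A] [Algebra ℂ A] [StarModule ℂ A] where
  eps : (A →⋆ₐ[ℂ] A) → (A →⋆ₐ[ℂ] A) → A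
  unitary_left : ∀ ρ σ, star (eps ρ σ) * eps ρ σ = 1
  unitary_right : ∀ ρ σ, eps ρ σ * star (eps ρ σ) = 1
  intertwine : ∀ ρ σ (n : A), eps ρ σ * ρ (σ n) = σ (ρ n) * eps ρ σ
  nat_left : ∀ (ρ ρ' σ : A →⋆ₐ[ℂ] A) (t : A),
    (∀ n : A, t * ρ n = ρ' n * t) → eps ρ' σ * t = σ t * eps ρ σ
  nat_right : ∀ (ρ σ σ' : A →⋆ₐ[ℂ] A) (t : A),
    (∀ n : A, t * σ n = σ' n * t) → eps ρ σ' * ρ t = t * eps ρ σ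
  tensor_left : ∀ ρ ρ' σ, eps (ρ.comp ρ') σ = eps ρ σ * ρ (eps ρ' σ)
  tensor_right : ∀ ρ σ σ', eps ρ (σ.comp σ') = σ (eps ρ σ') * eps ρ σ
  eps_id_left : ∀ σ, eps (idEnd A) σ = 1
  eps_id_right : ∀ ρ, eps ρ (idEnd A) = 1

variable {A : Type*} [Ring A] [StarRing A] [Algebra ℂ A] [StarModule ℂ A]

/-- The braided product `m^A ×_ε m^B := θ^A(ε_{θ^A,θ^B}) m^A θ^A(m^B)` of Pimsner–Popa
elements. -/
def bprod (Br : Braiding A) (θA θB : A →⋆ₐ[ℂ] A) (mAi mBj : A) : A :=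
  θA (Br.eps θA θB) * mAi * θA mBj

/-!
The element `T := (m^A_i)* w^A` intertwines `θ^A` with itself, hence commutes with `θ^A(N)`,
and naturality of the braiding against `w^B ∈ Hom(id, θ^B)` gives `(ε^±_{θ^A,θ^B})* w^B = θ^A(w^B)`.
Together these turn `(m^A_i ×_ε^± m^B_j)* w^A w^B` into `T θ^A(S)` with `S := (m^B_j)* w^B`, so
`p^{AB,±}_{i,j} = T θ^A(S S*) T* = T T* θ^A(S S*) = p^A_i θ^A(p^B_j)`, and `p^A_i = T T*` commutes
with `θ^A(N)` as well.
-/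

section Intertwiners

variable {R : Type*} [Semiring R] [StarRing R] [Algebra ℂ R]

@[simp]
theorem idEnd_apply (a : R) : idEnd R a = a := rfl

/-- `t ∈ Hom(ρ, σ)`. -/
def IsIntertwiner (ρ σ : R →⋆ₐ[ℂ] R) (t : R) : Prop :=
  ∀ n : R, t * ρ n = σ n * t

namespace IsIntertwiner

variable {ρ σ τ : R →⋆ₐ[ℂ] R} {s t : R}

theorem star (h : IsIntertwiner ρ σ t) : IsIntertwiner σ ρ (star t) := fun n => by
  simpa only [star_mul, map_star, star_star] using (congrArg Star.star (h (Star.star n))).symm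

theorem mul (hs : IsIntertwiner σ τ s) (ht : IsIntertwiner ρ σ t) :
    IsIntertwiner ρ τ (s * t) := fun n => by
  rw [mul_assoc, ht n, ← mul_assoc, hs n, mul_assoc]

theorem comp_right (h : IsIntertwiner ρ σ t) (τ : R →⋆ₐ[ℂ] R) :
    IsIntertwiner (ρ.comp τ) (σ.comp τ) t := fun n => h (τ n)

theorem mul_map_mul_star_eq {θ : R →⋆ₐ[ℂ] R} (ht : IsIntertwiner θ θ t) (s : R) :
    (t * θ s) * Star.star (t * θ s) = (t * Star.star t) * θ (s * Star.star s) := by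
  rw [star_mul, ← map_star, mul_assoc, ← mul_assoc (θ s), ← map_mul, ← ht.star (s * Star.star s),
    mul_assoc]

end IsIntertwiner

end Intertwiners

theorem star_mul_mul_star_star_mul {R : Type*} [Semigroup R] [StarMul R] (m w : R) :
    (star m * w) * star (star m * w) = star m * (w * star w) * m := by
  simp only [star_mul, star_star, mul_assoc]

namespace Braiding

theorem eps_mul_map_eq_of_isIntertwiner_id (Br : Braiding A) (ρ : A →⋆ₐ[ℂ] A)
    {σ : A →⋆ₐ[ℂ] A} {w : A} (hw : IsIntertwiner (idEnd A) σ w) :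
    Br.eps ρ σ * ρ w = w := by
  simpa only [Br.eps_id_right, mul_one] using Br.nat_right ρ (idEnd A) σ w hw

theorem star_eps_mul_eq_map_of_isIntertwiner_id (Br : Braiding A) (ρ : A →⋆ₐ[ℂ] A)
    {σ : A →⋆ₐ[ℂ] A} {w : A} (hw : IsIntertwiner (idEnd A) σ w) :
    star (Br.eps ρ σ) * w = ρ w := by
  conv_lhs => rw [← Br.eps_mul_map_eq_of_isIntertwiner_id ρ hw]
  rw [← mul_assoc, Br.unitary_left, one_mul]

end Braiding

theorem star_bprod_mul_eq (Br : Braiding A) {θA θB : A →⋆ₐ[ℂ] A} {wA wB mA : A} (mB : A)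
    (hwA : IsIntertwiner (idEnd A) θA wA) (hwB : IsIntertwiner (idEnd A) θB wB)
    (hT : IsIntertwiner θA θA (star mA * wA)) :
    star (bprod Br θA θB mA mB) * (wA * wB) = (star mA * wA) * θA (star mB * wB) := by
  have hεw : θA (star (Br.eps θA θB)) * wA * wB = wA * θA wB := by
    rw [← hwA, idEnd_apply, mul_assoc, Br.star_eps_mul_eq_map_of_isIntertwiner_id θA hwB]
  calc star (bprod Br θA θB mA mB) * (wA * wB)
      = θA (star mB) * (star mA * (θA (star (Br.eps θA θB)) * wA * wB)) := by
        simp only [bprod, star_mul, map_star, mul_assoc]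
    _ = θA (star mB) * (star mA * wA) * θA wB := by
        rw [hεw]; simp only [mul_assoc]
    _ = (star mA * wA) * θA (star mB * wB) := by rw [← hT, map_mul, mul_assoc]

theorem braided_product_projection_factorization_general
    (Br : Braiding A) (θA θB : A →⋆ₐ[ℂ] A)
    {I J : Type*} (wA wB : A) (mA : I → A) (mB : J → A)
    (hwA : ∀ n : A, wA * n = θA n * wA)
    (hwB : ∀ n : A, wB * n = θB n * wB)
    (hmA : ∀ i (n : A), mA i * θA n = θA (θA n) * mA i)
    (i : I) (j : J) :
    star (bprod Br θA θB (mA i) (mB j)) * (wA * wB * star wB * star wA) *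
        bprod Br θA θB (mA i) (mB j)
      = (star (mA i) * (wA * star wA) * mA i) *
          θA (star (mB j) * (wB * star wB) * mB j)
    ∧ star (bprod Br θA θB (mA i) (mB j)) * (wA * wB * star wB * star wA) *
        bprod Br θA θB (mA i) (mB j)
      = θA (star (mB j) * (wB * star wB) * mB j) *
          (star (mA i) * (wA * star wA) * mA i) := by
  have hwA' : IsIntertwiner (idEnd A) θA wA := hwA
  have hmA' : IsIntertwiner θA (θA.comp θA) (mA i) := hmA i
  have hT : IsIntertwiner θA θA (star (mA i) * wA) := hmA'.star.mul (hwA'.comp_right θA)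
  have hY := star_bprod_mul_eq Br (mB j) hwA' hwB hT
  have hpAB : star (bprod Br θA θB (mA i) (mB j)) * (wA * wB * star wB * star wA) *
      bprod Br θA θB (mA i) (mB j)
      = (star (mA i) * wA) * star (star (mA i) * wA) *
          θA ((star (mB j) * wB) * star (star (mB j) * wB)) := by
    rw [← hT.mul_map_mul_star_eq, ← hY]
    simp only [star_mul, star_star, mul_assoc]
  rw [hpAB, star_mul_mul_star_star_mul, star_mul_mul_star_star_mul]
  refine ⟨rfl, ?_⟩
  rw [← star_mul_mul_star_star_mul (mA i) wA]
  exact hT.mul hT.star _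

/-- The Pimsner–Popa projections of the braided product of two
generalized Q-systems of intertwiners factorize:
`p^{AB}_{i,j} = p^A_i ⋅ θ^A(p^B_j) = θ^A(p^B_j) ⋅ p^A_i`. -/
theorem braided_product_projection_factorization
    (Br : Braiding A) (θA θB : A →⋆ₐ[ℂ] A)
    {I J : Type*} (wA wB : A) (mA : I → A) (mB : J → A)
    (hwA : ∀ n : A, wA * n = θA n * wA) (hwA_iso : star wA * wA = 1)
    (hwB : ∀ n : A, wB * n = θB n * wB) (hwB_iso : star wB * wB = 1)
    (hmA : ∀ i (n : A), mA i * θA n = θA (θA n) * mA i)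
    (hmB : ∀ j (n : A), mB j * θB n = θB (θB n) * mB j)
    (i : I) (j : J) :
    star (bprod Br θA θB (mA i) (mB j)) * (wA * wB * star wB * star wA) *
        bprod Br θA θB (mA i) (mB j)
      = (star (mA i) * (wA * star wA) * mA i) *
          θA (star (mB j) * (wB * star wB) * mB j)
    ∧ star (bprod Br θA θB (mA i) (mB j)) * (wA * wB * star wB * star wA) *
        bprod Br θA θB (mA i) (mB j)
      = θA (star (mB j) * (wB * star wB) * mB j) *
          (star (mA i) * (wA * star wA) * mA i) :=
  braided_product_projection_factorization_general Br θA θB wA wB mA mB hwA hwB hmA i j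
end

section
/- With N₁^A ×_ε^± N₁^B := ⟨θ^Aθ^B(N), {m^A_i ×_ε^± m^B_j}⟩, one has N₁^A ×_ε^± N₁^B ⊆ N₁^A := ⟨θ^A(N), {m^A_i}⟩ and Ad(ε^±_{θ^A,θ^B})(N₁^A ×_ε^± N₁^B) ⊆ N₁^B := ⟨θ^B(N), {m^B_j}⟩. In particular ε^±_{θ^A,θ^B} θ^Aθ^B(ε^±_{θ^A,θ^B}) θ^A(ε^±_{θ^A,θ^B}) m^A_i θ^A(m^B_j) (ε^±_{θ^A,θ^B})* = θ^B(ε^∓_{θ^B,θ^A}) m^B_j θ^B(m^A_i). -/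
variable {A : Type*} [Ring A] [StarRing A] [Algebra ℂ A] [StarModule ℂ A]

/-- Conjugation by a unitary as a star algebra homomorphism. -/
def adConj (u : A) (hu : star u * u = 1) (hu' : u * star u = 1) : A →⋆ₐ[ℂ] A where
  toFun y := u * y * star u
  map_one' := by show u * 1 * star u = 1; rw [mul_one, hu']
  map_mul' x y := by
    show u * (x * y) * star u = (u * x * star u) * (u * y * star u)
    have : (u * x * star u) * (u * y * star u) = u * x * (star u * u) * y * star u := by
      noncomm_ring
    rw [this, hu, mul_one, mul_assoc u x y]
  map_zero' := by show u * 0 * star u = 0; simp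
  map_add' x y := by show u * (x + y) * star u = u * x * star u + u * y * star u; noncomm_ring
  commutes' c := by
    show u * algebraMap ℂ A c * star u = algebraMap ℂ A c
    simp only [Algebra.algebraMap_eq_smul_one]
    rw [mul_smul_comm, mul_one, smul_mul_assoc, hu']
  map_star' y := by
    show u * star y * star u = star (u * y * star u)
    simp only [star_mul, star_star, mul_assoc]

/-- With `N₁^A ×_ε N₁^B := ⟨θ^Aθ^B(N), {m^A_i ×_ε m^B_j}⟩` one has
`N₁^A ×_ε N₁^B ⊆ N₁^A = ⟨θ^A(N), {m^A_i}⟩` and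
`Ad(ε_{θ^A,θ^B})(N₁^A ×_ε N₁^B) ⊆ N₁^B = ⟨θ^B(N), {m^B_j}⟩`; in particular the key braid
identity
`ε θ^Aθ^B(ε) θ^A(ε) m^A_i θ^A(m^B_j) ε* = θ^B(ε^op) m^B_j θ^B(m^A_i)` holds, where
`ε^op = ε^∓_{θ^B,θ^A} = (ε^±_{θ^A,θ^B})*`. -/
theorem braided_product_embedding_lemma
    (Br : Braiding A) (θA θB : A →⋆ₐ[ℂ] A)
    {I J : Type*} (wA wB : A) (mA : I → A) (mB : J → A)
    (hwA : ∀ n : A, wA * n = θA n * wA) (hwA_iso : star wA * wA = 1)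
    (hwB : ∀ n : A, wB * n = θB n * wB) (hwB_iso : star wB * wB = 1)
    (hmA : ∀ i (n : A), mA i * θA n = θA (θA n) * mA i)
    (hmB : ∀ j (n : A), mB j * θB n = θB (θB n) * mB j) :
    StarAlgebra.adjoin ℂ
        (Set.range (⇑(θA.comp θB)) ∪
          Set.range (fun p : I × J => bprod Br θA θB (mA p.1) (mB p.2)))
      ≤ StarAlgebra.adjoin ℂ (Set.range (⇑θA) ∪ Set.range mA)
    ∧ (∀ y ∈ StarAlgebra.adjoin ℂ
          (Set.range (⇑(θA.comp θB)) ∪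
            Set.range (fun p : I × J => bprod Br θA θB (mA p.1) (mB p.2))),
        Br.eps θA θB * y * star (Br.eps θA θB) ∈
          StarAlgebra.adjoin ℂ (Set.range (⇑θB) ∪ Set.range mB))
    ∧ (∀ (i : I) (j : J),
        Br.eps θA θB * θA (θB (Br.eps θA θB)) * θA (Br.eps θA θB) * mA i * θA (mB j) *
            star (Br.eps θA θB)
          = θB (star (Br.eps θA θB)) * mB j * θB (mA i)) := by
  classical
  set ε := Br.eps θA θB with hε
  have hu1 : star ε * ε = 1 := Br.unitary_left θA θB
  have hu2 : ε * star ε = 1 := Br.unitary_right θA θB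
  have step1 : ∀ i, ε * θA ε * mA i = θB (mA i) * ε := by
    intro i
    have h := Br.nat_left θA (θA.comp θA) θB (mA i) (by intro n; simpa using hmA i n)
    rw [Br.tensor_left] at h
    simpa [mul_assoc, hε] using h
  have step2 : ∀ j, ε * θA (mB j) = θB (star ε) * mB j * ε := by
    intro j
    have h := Br.nat_right θA θB (θB.comp θB) (mB j) (by intro n; simpa using hmB j n)
    rw [Br.tensor_right] at h
    have h' : θB (star ε) * (θB ε * ε * θA (mB j)) = θB (star ε) * (mB j * ε) := by
      rw [h]
    calc ε * θA (mB j) = θB (star ε * ε) * (ε * θA (mB j)) := by rw [hu1, map_one, one_mul]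
      _ = θB (star ε) * (θB ε * ε * θA (mB j)) := by rw [map_mul]; noncomm_ring
      _ = θB (star ε) * mB j * ε := by rw [h']; noncomm_ring
  have step1r : ∀ i (x : A), ε * (θA ε * (mA i * x)) = θB (mA i) * (ε * x) := by
    intro i x
    have := congrArg (fun y => y * x) (step1 i)
    simpa only [mul_assoc] using this
  have step2r : ∀ j (x : A), ε * (θA (mB j) * x) = θB (star ε) * (mB j * (ε * x)) := by
    intro j x
    have := congrArg (fun y => y * x) (step2 j)
    simpa only [mul_assoc] using this
  have intr : ∀ (n x : A), ε * (θA (θB n) * x) = θB (θA n) * (ε * x) := by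
    intro n x
    have := congrArg (fun y => y * x) (Br.intertwine θA θB n)
    simpa only [mul_assoc] using this
  have step3 : ∀ n : A, ε * θA (θB n) * star ε = θB (θA n) := by
    intro n
    rw [Br.intertwine θA θB n, mul_assoc, hu2, mul_one]
  have stepP : ∀ i j, ε * (θA ε * mA i * θA (mB j)) * star ε
      = θB (mA i) * (θB (star ε) * mB j) := by
    intro i j
    simp only [mul_assoc]
    rw [step1r i, step2r j, hu2, mul_one]
  refine ⟨?_, ?_, ?_⟩
  · refine StarAlgebra.adjoin_le ?_
    rintro x (⟨n, rfl⟩ | ⟨⟨i, j⟩, rfl⟩)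
    · exact StarAlgebra.subset_adjoin ℂ _ (Or.inl ⟨θB n, rfl⟩)
    · exact mul_mem (mul_mem
        (StarAlgebra.subset_adjoin ℂ _ (Or.inl ⟨ε, rfl⟩))
        (StarAlgebra.subset_adjoin ℂ _ (Or.inr ⟨i, rfl⟩)))
        (StarAlgebra.subset_adjoin ℂ _ (Or.inl ⟨mB j, rfl⟩))
  · intro y hy
    have hle : StarAlgebra.adjoin ℂ
        (Set.range (⇑(θA.comp θB)) ∪
          Set.range (fun p : I × J => bprod Br θA θB (mA p.1) (mB p.2)))
        ≤ StarSubalgebra.comap (adConj ε hu1 hu2)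
            (StarAlgebra.adjoin ℂ (Set.range (⇑θB) ∪ Set.range mB)) := by
      refine StarAlgebra.adjoin_le ?_
      rintro x (⟨n, rfl⟩ | ⟨⟨i, j⟩, rfl⟩)
      · rw [SetLike.mem_coe, StarSubalgebra.mem_comap]
        show ε * (θA.comp θB) n * star ε ∈ _
        have h : ε * (θA.comp θB) n * star ε = θB (θA n) := step3 n
        rw [h]
        exact StarAlgebra.subset_adjoin ℂ _ (Or.inl ⟨θA n, rfl⟩)
      · rw [SetLike.mem_coe, StarSubalgebra.mem_comap]
        show ε * bprod Br θA θB (mA i) (mB j) * star ε ∈ _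
        rw [show bprod Br θA θB (mA i) (mB j) = θA ε * mA i * θA (mB j) from rfl,
          stepP i j]
        exact mul_mem
          (StarAlgebra.subset_adjoin ℂ _ (Or.inl ⟨mA i, rfl⟩))
          (mul_mem (StarAlgebra.subset_adjoin ℂ _ (Or.inl ⟨star ε, rfl⟩))
            (StarAlgebra.subset_adjoin ℂ _ (Or.inr ⟨j, rfl⟩)))
    exact (StarSubalgebra.mem_comap _ _ _).mp (hle hy)
  · intro i j
    have key : θA ε * (mA i * star ε) = star ε * θB (mA i) := by
      have h := congrArg (fun y => y * star ε) (step1 i)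
      simp only [mul_assoc, hu2, mul_one] at h
      have h2 := congrArg (fun y => star ε * y) h
      simpa only [← mul_assoc, hu1, one_mul] using h2
    have hfin : θB (θA ε) * (θB (mA i) * θB (star ε)) = θB (star ε) * θB (θB (mA i)) := by
      rw [← map_mul, ← map_mul, key, map_mul]
    simp only [mul_assoc]
    rw [intr ε, step1r i, step2r j, hu2, mul_one, hmB j (mA i)]
    simp only [← mul_assoc]
    rw [mul_assoc (θB (θA ε)) (θB (mA i)) (θB (star ε)), hfin]
end

section
/- Assume the unital conditions θ^A((w^A)*) m^A_0 = 1 and θ^B((w^B)*) m^B_0 = 1 for distinguished indices 0 ∈ I, 0 ∈ J. Then for every j, θ^A(m^B_j) = θ^Aθ^B((w^A)*) · (m^A_0 ×_ε^± m^B_j), so θ^A(m^B_j) belongs to the braided product algebra N₁^A ×_ε^± N₁^B = ⟨θ^Aθ^B(N), {m^A_i ×_ε^± m^B_j}⟩. -/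
variable {A : Type*} [Ring A] [StarRing A] [Algebra ℂ A] [StarModule ℂ A]

/-- Under the unital conditions `θ^A((w^A)*) m^A_0 = 1` and
`θ^B((w^B)*) m^B_0 = 1`, for every `j` one has
`θ^A(m^B_j) = θ^Aθ^B((w^A)*) ⋅ (m^A_0 ×_ε m^B_j)`, so `θ^A(m^B_j)` belongs to the braided
product algebra `⟨θ^Aθ^B(N), {m^A_i ×_ε m^B_j}⟩`. -/
theorem unital_braided_product_contains_thetaA_mB
    (Br : Braiding A) (θA θB : A →⋆ₐ[ℂ] A)
    {I J : Type*} (wA wB : A) (mA : I → A) (mB : J → A) (i₀ : I) (j₀ : J)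
    (hwA : ∀ n : A, wA * n = θA n * wA) (hwA_iso : star wA * wA = 1)
    (hwB : ∀ n : A, wB * n = θB n * wB) (hwB_iso : star wB * wB = 1)
    (hmA : ∀ i (n : A), mA i * θA n = θA (θA n) * mA i)
    (hmB : ∀ j (n : A), mB j * θB n = θB (θB n) * mB j)
    (huA : θA (star wA) * mA i₀ = 1)
    (huB : θB (star wB) * mB j₀ = 1) :
    ∀ j : J,
      θA (mB j) = (θA.comp θB) (star wA) * bprod Br θA θB (mA i₀) (mB j)
      ∧ θA (mB j) ∈ StarAlgebra.adjoin ℂ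
          (Set.range (⇑(θA.comp θB)) ∪
            Set.range (fun p : I × J => bprod Br θA θB (mA p.1) (mB p.2))) := by
  intro j
  -- naturality: eps θA θB ∘ wA = θB wA
  have h1 : Br.eps θA θB * wA = θB wA := by
    have := Br.nat_left (idEnd A) θA θB wA (fun n => hwA n)
    rw [Br.eps_id_left] at this
    simpa using this
  have h2 : θB (star wA) * Br.eps θA θB = star wA := by
    have hs : star wA * star (Br.eps θA θB) = θB (star wA) := by
      calc star wA * star (Br.eps θA θB) = star (Br.eps θA θB * wA) := by
            rw [star_mul]
        _ = star (θB wA) := by rw [h1]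
        _ = θB (star wA) := by rw [map_star]
    calc θB (star wA) * Br.eps θA θB
        = star wA * (star (Br.eps θA θB) * Br.eps θA θB) := by
          rw [← hs, mul_assoc]
      _ = star wA := by rw [Br.unitary_left, mul_one]
  have h3 : (θA.comp θB) (star wA) * bprod Br θA θB (mA i₀) (mB j) = θA (mB j) := by
    have h4 : θA (θB (star wA)) * θA (Br.eps θA θB) = θA (star wA) := by
      rw [← map_mul, h2]
    calc (θA.comp θB) (star wA) * bprod Br θA θB (mA i₀) (mB j)
        = θA (θB (star wA)) * θA (Br.eps θA θB) * (mA i₀ * θA (mB j)) := by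
          simp only [bprod, StarAlgHom.comp_apply, mul_assoc]
      _ = θA (star wA) * mA i₀ * θA (mB j) := by rw [h4, ← mul_assoc]
      _ = θA (mB j) := by rw [huA, one_mul]
  refine ⟨h3.symm, ?_⟩
  rw [← h3]
  exact mul_mem
    (StarAlgebra.subset_adjoin ℂ _ (Or.inl ⟨star wA, rfl⟩))
    (StarAlgebra.subset_adjoin ℂ _ (Or.inr ⟨(i₀, j), rfl⟩))
end

section
/- In the braided product M^A ×_ε^± M^B of two discrete extensions given by unital generalized Q-systems of intertwiners, the images of the dual Pimsner–Popa elements satisfy the commutation relations j^B(M_j^B) j^A(M_i^A) = ε^±_{θ^A,θ^B} · j^A(M_i^A) j^B(M_j^B) for all i ∈ I, j ∈ J, where j^A, j^B are the canonical embeddings of M^A, M^B into the braided product; moreover M^A ×_ε^± M^B = ⟨j^A(M^A), j^B(M^B)⟩ and j^A∘ι^A = j^B∘ι^B on N. -/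
variable {A : Type*} [Ring A] [StarRing A] [Algebra ℂ A] [StarModule ℂ A]

/-- In the braided product `M^A ×_ε M^B` of the two discrete extensions
of `N` determined by unital generalized Q-systems of intertwiners, the canonical
embeddings `j^A, j^B` (characterized through the canonical endomorphisms
`γ^A, γ^B, γ^{AB}` dual to `θ^A, θ^B, θ^Aθ^B`) satisfy
`j^A ∘ ι^A = j^B ∘ ι^B` on `N`, the commutation relations
`j^B(M^B_j) j^A(M^A_i) = ε_{θ^A,θ^B} ⋅ j^A(M^A_i) j^B(M^B_j)`, and
`M^A ×_ε M^B = ⟨j^A(M^A), j^B(M^B)⟩`. -/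
theorem braided_product_embeddings_and_commutation
    {MA MB MAB : Type*}
    [Ring MA] [StarRing MA] [Algebra ℂ MA] [StarModule ℂ MA]
    [Ring MB] [StarRing MB] [Algebra ℂ MB] [StarModule ℂ MB]
    [Ring MAB] [StarRing MAB] [Algebra ℂ MAB] [StarModule ℂ MAB]
    (Br : Braiding A) (θA θB : A →⋆ₐ[ℂ] A)
    {I J : Type*} (wA wB : A) (mA : I → A) (mB : J → A) (i₀ : I) (j₀ : J)
    (hwA : ∀ n : A, wA * n = θA n * wA) (hwA_iso : star wA * wA = 1)
    (hwB : ∀ n : A, wB * n = θB n * wB) (hwB_iso : star wB * wB = 1)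
    (hmA : ∀ i (n : A), mA i * θA n = θA (θA n) * mA i)
    (hmB : ∀ j (n : A), mB j * θB n = θB (θB n) * mB j)
    -- unital conditions (distinguished labels):
    (huA : θA (star wA) * mA i₀ = 1) (huB : θB (star wB) * mB j₀ = 1)
    -- the extensions `N ⊆ M^A`, `N ⊆ M^B`, `N ⊆ M^A ×_ε M^B` with inclusion maps and
    -- canonical endomorphisms (realized as injections onto the subalgebras of `N`):
    (ιA : A →⋆ₐ[ℂ] MA) (ιB : A →⋆ₐ[ℂ] MB) (ιAB : A →⋆ₐ[ℂ] MAB)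
    (γA : MA →⋆ₐ[ℂ] A) (γB : MB →⋆ₐ[ℂ] A) (γAB : MAB →⋆ₐ[ℂ] A)
    (hγA_inj : Function.Injective γA) (hγB_inj : Function.Injective γB)
    (hγAB_inj : Function.Injective γAB)
    (hγιA : ∀ n : A, γA (ιA n) = θA n)
    (hγιB : ∀ n : A, γB (ιB n) = θB n)
    (hγιAB : ∀ n : A, γAB (ιAB n) = θA (θB n))
    -- the dual Pimsner–Popa elements `M^A_i = (γ^A)⁻¹(m^A_i)`, etc.:
    (MiA : I → MA) (MjB : J → MB) (MijAB : I × J → MAB)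
    (hMiA : ∀ i, γA (MiA i) = mA i)
    (hMjB : ∀ j, γB (MjB j) = mB j)
    (hMij : ∀ p : I × J, γAB (MijAB p) = bprod Br θA θB (mA p.1) (mB p.2))
    (hMiA_charged : ∀ i (n : A), MiA i * ιA n = ιA (θA n) * MiA i)
    (hMjB_charged : ∀ j (n : A), MjB j * ιB n = ιB (θB n) * MjB j)
    -- `M^A ×_ε M^B` is generated by `N` and the braided-product elements:
    (hgen : StarAlgebra.adjoin ℂ (Set.range (⇑ιAB) ∪ Set.range MijAB) = ⊤)
    -- the embeddings `j^A = (γ^{AB})⁻¹ ∘ Ad(ε*) ∘ θ^B ∘ γ^A`,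
    -- `j^B = (γ^{AB})⁻¹ ∘ θ^A ∘ γ^B`:
    (jA : MA →⋆ₐ[ℂ] MAB) (jB : MB →⋆ₐ[ℂ] MAB)
    (hjA : ∀ x : MA,
      γAB (jA x) = star (Br.eps θA θB) * θB (γA x) * Br.eps θA θB)
    (hjB : ∀ y : MB, γAB (jB y) = θA (γB y)) :
    (∀ n : A, jA (ιA n) = jB (ιB n))
    ∧ (∀ (i : I) (j : J),
        jB (MjB j) * jA (MiA i) = ιAB (Br.eps θA θB) * (jA (MiA i) * jB (MjB j)))
    ∧ StarAlgebra.adjoin ℂ (Set.range (⇑jA) ∪ Set.range (⇑jB)) = ⊤ := by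
  set E := Br.eps θA θB with hE
  -- key identity 1 : star E * θB (mA i) * E = θA E * mA i
  have key1 : ∀ i, star E * θB (mA i) * E = θA E * mA i := by
    intro i
    have h1 : Br.eps (θA.comp θA) θB * mA i = θB (mA i) * E :=
      Br.nat_left θA (θA.comp θA) θB (mA i) (fun n => hmA i n)
    have h2 : Br.eps (θA.comp θA) θB = E * θA E := Br.tensor_left θA θA θB
    calc star E * θB (mA i) * E = star E * (θB (mA i) * E) := by rw [mul_assoc]
      _ = star E * (Br.eps (θA.comp θA) θB * mA i) := by rw [h1]
      _ = star E * (E * θA E * mA i) := by rw [h2]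
      _ = star E * E * (θA E * mA i) := by simp only [mul_assoc]
      _ = θA E * mA i := by rw [Br.unitary_left, one_mul]
  -- key identity 2 : mB j * E = θB E * E * θA (mB j)
  have key3 : ∀ j, mB j * E = θB E * E * θA (mB j) := by
    intro j
    have h3 : Br.eps θA (θB.comp θB) * θA (mB j) = mB j * E :=
      Br.nat_right θA θB (θB.comp θB) (mB j) (fun n => hmB j n)
    have h4 : Br.eps θA (θB.comp θB) = θB E * E := Br.tensor_right θA θB θB
    rw [← h3, h4]
  refine ⟨?_, ?_, ?_⟩
  · -- j^A ∘ ι^A = j^B ∘ ι^B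
    intro n
    apply hγAB_inj
    rw [hjA, hγιA, hjB, hγιB]
    have h := Br.intertwine θA θB n
    rw [mul_assoc, ← h, ← mul_assoc, Br.unitary_left, one_mul]
  · -- commutation relations
    intro i j
    apply hγAB_inj
    rw [map_mul, map_mul, map_mul, hjA, hjB, hγιAB, hMiA, hMjB, key1]
    calc θA (mB j) * (θA E * mA i)
        = θA (mB j) * θA E * mA i := by rw [mul_assoc]
      _ = θA (mB j * E) * mA i := by rw [map_mul]
      _ = θA (θB E * E * θA (mB j)) * mA i := by rw [key3]
      _ = θA (θB E) * θA E * (θA (θA (mB j)) * mA i) := by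
          simp only [map_mul, mul_assoc]
      _ = θA (θB E) * θA E * (mA i * θA (mB j)) := by rw [← hmA]
      _ = θA (θB E) * (θA E * mA i * θA (mB j)) := by simp only [mul_assoc]
  · -- generation
    have hι : ∀ n : A, ιAB n = jB (ιB n) := by
      intro n
      apply hγAB_inj
      rw [hjB, hγιB, hγιAB]
    have hM : ∀ p : I × J, MijAB p = jA (MiA p.1) * jB (MjB p.2) := by
      intro p
      apply hγAB_inj
      rw [map_mul, hjA, hjB, hMiA, hMjB, hMij, bprod, key1]
    rw [← top_le_iff, ← hgen]
    apply StarAlgebra.adjoin_le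
    rintro x (⟨n, rfl⟩ | ⟨p, rfl⟩)
    · rw [hι]
      exact StarAlgebra.subset_adjoin ℂ _ (Or.inr ⟨ιB n, rfl⟩)
    · rw [hM]
      exact mul_mem (StarAlgebra.subset_adjoin ℂ _ (Or.inl ⟨MiA p.1, rfl⟩))
        (StarAlgebra.subset_adjoin ℂ _ (Or.inr ⟨MjB p.2, rfl⟩))
end

section
/- Let N ⊆ M be a discrete inclusion with N an infinite factor with separable predual, E ∈ E(M,N) a faithful normal conditional expectation, and {ψ_i} ⊆ M a Pimsner–Popa basis of charged fields (ψ_i n = ρ_i(n) ψ_i for all n ∈ N, with ρ_i ≺ θ irreducible, and E(ψ_i ψ_i*) = 1). Then for every m ∈ M the coefficients E(ψ_i m) ∈ N in the Pimsner–Popa expansion m = Σ_i ψ_i* E(ψ_i m) are uniquely determined. -/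
open scoped ComplexOrder

/-- Unconditional convergence of the net of partial sums `∑ i ∈ F, t i` to `m` in the
topology generated by the seminorms `x ↦ φ (x* x) ^ (1/2)`, `φ` ranging over the normal
(here: continuous) positive `E`-invariant functionals on `M`. -/
def PiPoConverges {H : Type*} [NormedAddCommGroup H] [InnerProductSpace ℂ H]
    [CompleteSpace H] (M : VonNeumannAlgebra H)
    (E : (H →L[ℂ] H) →ₗ[ℂ] (H →L[ℂ] H))
    {ι : Type*} (t : ι → (H →L[ℂ] H)) (m : H →L[ℂ] H) : Prop :=
  ∀ φ : (H →L[ℂ] H) →ₗ[ℂ] ℂ, Continuous φ →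
    (∀ x ∈ M, 0 ≤ φ (star x * x)) → (∀ x ∈ M, φ (E x) = φ x) →
    Filter.Tendsto
      (fun F : Finset ι => φ (star (m - ∑ i ∈ F, t i) * (m - ∑ i ∈ F, t i)))
      Filter.atTop (nhds 0)

/-- Let `N ⊆ M` be a discrete inclusion (`N` an infinite factor), and
`{ψ i}` a Pimsner–Popa basis of charged fields (`ψ i ⋅ n = ρ i (n) ⋅ ψ i` for `n ∈ N`,
with `E (ψ i (ψ i)*) = 1`).  Then for every `m ∈ M` the coefficients `E (ψ i * m) ∈ N` of
the Pimsner–Popa expansion `m = ∑ i, (ψ i)* E (ψ i * m)` are uniquely determined: any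
convergent expansion `m = ∑ i, (ψ i)* c i` with `c i ∈ N` has `c i = E (ψ i * m)`. -/
theorem charged_field_expansion_unique
    {H : Type*} [NormedAddCommGroup H] [InnerProductSpace ℂ H] [CompleteSpace H]
    (N M : VonNeumannAlgebra H)
    (hNM : ∀ x : H →L[ℂ] H, x ∈ N → x ∈ M)
    (E : (H →L[ℂ] H) →ₗ[ℂ] (H →L[ℂ] H))
    (hE_range : ∀ m ∈ M, E m ∈ N)
    (hE_id : ∀ n ∈ N, E n = n)
    (hE_star : ∀ m ∈ M, E (star m) = star (E m))
    (hE_bimod : ∀ n ∈ N, ∀ m ∈ M, ∀ n' ∈ N, E (n * m * n') = n * E m * n')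
    (hE_faithful : ∀ m ∈ M, E (star m * m) = 0 → m = 0)
    (e : H →L[ℂ] H)
    (he_sa : star e = e) (he_idem : e * e = e)
    (he_impl : ∀ m ∈ M, e * m * e = E m * e)
    (he_comm : ∀ n ∈ N, e * n = n * e)
    (he_sep : ∀ n ∈ N, n * e = 0 → n = 0)
    {ι : Type*} (ψ : ι → (H →L[ℂ] H)) (hψ : ∀ i, ψ i ∈ M)
    -- `{ψ i}` is a Pimsner–Popa basis:
    (hproj : ∀ i, (star (ψ i) * e * ψ i) * star (star (ψ i) * e * ψ i)
        = star (ψ i) * e * ψ i)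
    (horthP : ∀ i j, i ≠ j → (star (ψ i) * e * ψ i) * (star (ψ j) * e * ψ j) = 0)
    (hsum : ∀ ξ : H, HasSum (fun i => (star (ψ i) * e * ψ i) ξ) ξ)
    -- the `ψ i` are charged fields for irreducible subsectors `ρ i ≺ θ`:
    (ρ : ι → (H →L[ℂ] H) → (H →L[ℂ] H))
    (hρN : ∀ i, ∀ n ∈ N, ρ i n ∈ N)
    (hcharged : ∀ i, ∀ n ∈ N, ψ i * n = ρ i n * ψ i)
    (hnorm : ∀ i, E (ψ i * star (ψ i)) = 1)
    (horthE : ∀ i j, i ≠ j → E (ψ i * star (ψ j)) = 0) :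
    ∀ m ∈ M, ∀ c : ι → (H →L[ℂ] H), (∀ i, c i ∈ N) →
      PiPoConverges M E (fun i => star (ψ i) * c i) m →
      ∀ i, c i = E (ψ i * m) := by
  classical
  intro m hm c hc hconv j
  -- Step A: for each ξ, the partial sums converge at `e ξ`
  have key : ∀ ξ : H, HasSum (fun i => (star (ψ i) * c i) (e ξ)) (m (e ξ)) := by
    intro ξ
    set η := e ξ with hη
    set φ : (H →L[ℂ] H) →ₗ[ℂ] ℂ :=
      { toFun := fun x => @inner ℂ _ _ η (x η)
        map_add' := fun x y => by simp [inner_add_right]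
        map_smul' := fun a x => by simp [inner_smul_right] } with hφ
    have φsq : ∀ x : H →L[ℂ] H, φ (star x * x) = (‖x η‖ : ℂ)^2 := by
      intro x
      have h0 : φ (star x * x) = @inner ℂ _ _ η ((star x * x) η) := rfl
      rw [h0, ContinuousLinearMap.mul_apply, ContinuousLinearMap.star_eq_adjoint,
        ContinuousLinearMap.adjoint_inner_right, inner_self_eq_norm_sq_to_K]
      norm_cast
    have hφcont : Continuous φ :=
      continuous_inner.comp (continuous_const.prodMk
        ((ContinuousLinearMap.apply ℂ H η).continuous))
    have hφpos : ∀ x ∈ M, 0 ≤ φ (star x * x) := by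
      intro x _
      rw [φsq]
      exact_mod_cast sq_nonneg ‖x η‖
    have hφinv : ∀ x ∈ M, φ (E x) = φ x := by
      intro x hx
      have h1 : φ (E x) = @inner ℂ _ _ η ((E x) η) := rfl
      have h2 : φ x = @inner ℂ _ _ η (x η) := rfl
      have hsa : ∀ u v : H, @inner ℂ _ _ (e u) v = @inner ℂ _ _ u (e v) := by
        intro u v
        conv_lhs => rw [← he_sa]
        rw [ContinuousLinearMap.star_eq_adjoint, ContinuousLinearMap.adjoint_inner_left]
      have hex : @inner ℂ _ _ η (x η) = @inner ℂ _ _ ξ ((e * x * e) ξ) := by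
        rw [hη, hsa]; simp [ContinuousLinearMap.mul_apply]
      have hEex : @inner ℂ _ _ η ((E x) η) = @inner ℂ _ _ ξ ((e * E x * e) ξ) := by
        rw [hη, hsa]; simp [ContinuousLinearMap.mul_apply]
      have hEN : E x ∈ N := hE_range x hx
      have hcomp1 : e * E x * e = E x * e := by
        rw [he_impl (E x) (hNM _ hEN), hE_id _ hEN]
      rw [h1, h2, hEex, hex, hcomp1, he_impl x hx]
    have htend := hconv φ hφcont hφpos hφinv
    have htendn : Filter.Tendsto
        (fun F : Finset ι => ‖(m - ∑ i ∈ F, star (ψ i) * c i) η‖)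
        Filter.atTop (nhds 0) := by
      have h1 : Filter.Tendsto
          (fun F : Finset ι => (‖(m - ∑ i ∈ F, star (ψ i) * c i) η‖ : ℂ)^2)
          Filter.atTop (nhds 0) := by
        have heq : (fun F : Finset ι =>
            φ (star (m - ∑ i ∈ F, star (ψ i) * c i) * (m - ∑ i ∈ F, star (ψ i) * c i)))
            = fun F : Finset ι => (‖(m - ∑ i ∈ F, star (ψ i) * c i) η‖ : ℂ)^2 := by
          funext F; rw [φsq]
        rwa [heq] at htend
      have h2 : Filter.Tendsto
          (fun F : Finset ι => ‖(m - ∑ i ∈ F, star (ψ i) * c i) η‖^2)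
          Filter.atTop (nhds 0) := by
        have h4 := (Complex.continuous_re.tendsto 0).comp h1
        simpa [Function.comp_def, ← Complex.ofReal_pow] using h4
      have h3 := (Real.continuous_sqrt.tendsto 0).comp h2
      simpa [Function.comp_def, Real.sqrt_sq (norm_nonneg _)] using h3
    have htendv : Filter.Tendsto
        (fun F : Finset ι => (∑ i ∈ F, star (ψ i) * c i) η)
        Filter.atTop (nhds (m η)) := by
      rw [← tendsto_sub_nhds_zero_iff, tendsto_zero_iff_norm_tendsto_zero]
      convert htendn using 2 with F
      simp [norm_sub_rev]
    have heq : (fun F : Finset ι => ∑ i ∈ F, (star (ψ i) * c i) η)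
        = fun F : Finset ι => (∑ i ∈ F, star (ψ i) * c i) η := by
      funext F; rw [ContinuousLinearMap.sum_apply]
    show Filter.Tendsto (fun F : Finset ι => ∑ i ∈ F, (star (ψ i) * c i) η)
      Filter.atTop (nhds (m η))
    rw [heq]; exact htendv
  -- Step B: extract the j-th coefficient using the operator `e * ψ j`
  have hce : c j * e = E (ψ j * m) * e := by
    refine ContinuousLinearMap.ext fun ξ => ?_
    have h1 := ((e * ψ j).hasSum (key ξ))
    have hop : ∀ i, e * ψ j * (star (ψ i) * c i) * e
        = if i = j then c j * e else 0 := by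
      intro i
      have hstep : e * ψ j * (star (ψ i) * c i) * e
          = (e * (ψ j * star (ψ i)) * e) * c i := by
        have hcomm := he_comm (c i) (hc i)
        calc e * ψ j * (star (ψ i) * c i) * e
            = e * (ψ j * star (ψ i)) * (c i * e) := by noncomm_ring
          _ = e * (ψ j * star (ψ i)) * (e * c i) := by rw [← hcomm]
          _ = (e * (ψ j * star (ψ i)) * e) * c i := by noncomm_ring
      have hmem : ψ j * star (ψ i) ∈ M := mul_mem (hψ j) (star_mem (hψ i))
      rw [hstep, he_impl _ hmem]
      by_cases hij : i = j
      · subst hij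
        rw [hnorm i, if_pos rfl, one_mul, he_comm (c i) (hc i)]
      · rw [horthE j i (fun h => hij h.symm), if_neg hij, zero_mul, zero_mul]
    have h2 : ∀ i, (e * ψ j) ((star (ψ i) * c i) (e ξ))
        = (if i = j then c j * e else 0) ξ := by
      intro i
      rw [← hop i]
      simp [ContinuousLinearMap.mul_apply]
    have h3 : HasSum (fun i => (if i = j then c j * e else 0) ξ) ((e * ψ j) (m (e ξ))) := by
      rw [show (fun i => (if i = j then c j * e else 0) ξ)
          = fun i => (e * ψ j) ((star (ψ i) * c i) (e ξ)) from funext fun i => (h2 i).symm]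
      exact h1
    have h4 : HasSum (fun i => (if i = j then c j * e else 0) ξ) ((c j * e) ξ) := by
      have := hasSum_ite_eq j ((c j * e) ξ)
      convert this using 2 with i
      by_cases hij : i = j <;> simp [hij]
    have h5 : (c j * e) ξ = (e * ψ j) (m (e ξ)) := h4.unique h3
    have h6 : (e * ψ j) (m (e ξ)) = (E (ψ j * m) * e) ξ := by
      rw [← he_impl _ (mul_mem (hψ j) hm)]
      simp [ContinuousLinearMap.mul_apply]
    rw [h5, h6]
  have hmemN : c j - E (ψ j * m) ∈ N := sub_mem (hc j) (hE_range _ (mul_mem (hψ j) hm))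
  have hzero : (c j - E (ψ j * m)) * e = 0 := by
    rw [sub_mul, hce, sub_self]
  have := he_sep _ hmemN hzero
  exact sub_eq_zero.mp this
end

section
/- The braided product of two unital generalized Q-systems of intertwiners is again unital: if (θ^A, w^A, {m^A_i}) and (θ^B, w^B, {m^B_j}) satisfy m_0 = θ(w), w*m_i = m_i*w = (w*m_i)², and θ(w*)m_i = δ_{i,0}·1, then the braided product (θ^Aθ^B, w^Aw^B, {m^A_i ×_ε^± m^B_j}) satisfies the same three conditions with distinguished index (0,0). -/
variable {A : Type*} [Ring A] [StarRing A] [Algebra ℂ A] [StarModule ℂ A]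

/-- The braided product of two *unital* generalized Q-systems of
intertwiners is again unital: if both systems satisfy `m₀ = θ(w)`,
`w* m_i = (m_i)* w = (w* m_i)²` and `θ(w*) m_i = δ_{i,0} 1`, then the braided product
`(θ^Aθ^B, w^Aw^B, {m^A_i ×_ε m^B_j})` satisfies the same three conditions with
distinguished index `(0,0)`. -/
theorem braided_product_of_unital_is_unital
    (Br : Braiding A) (θA θB : A →⋆ₐ[ℂ] A)
    {I J : Type*} [DecidableEq I] [DecidableEq J]
    (wA wB : A) (mA : I → A) (mB : J → A) (i₀ : I) (j₀ : J)
    (hwA : ∀ n : A, wA * n = θA n * wA) (hwA_iso : star wA * wA = 1)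
    (hwB : ∀ n : A, wB * n = θB n * wB) (hwB_iso : star wB * wB = 1)
    (hmA : ∀ i (n : A), mA i * θA n = θA (θA n) * mA i)
    (hmB : ∀ j (n : A), mB j * θB n = θB (θB n) * mB j)
    -- unitality of the `A`-system:
    (hA₀ : mA i₀ = θA wA)
    (hA₁ : ∀ i, star wA * mA i = star (mA i) * wA)
    (hA₂ : ∀ i, star wA * mA i = (star wA * mA i) * (star wA * mA i))
    (hA₃ : ∀ i, θA (star wA) * mA i = if i = i₀ then 1 else 0)
    -- unitality of the `B`-system:
    (hB₀ : mB j₀ = θB wB)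
    (hB₁ : ∀ j, star wB * mB j = star (mB j) * wB)
    (hB₂ : ∀ j, star wB * mB j = (star wB * mB j) * (star wB * mB j))
    (hB₃ : ∀ j, θB (star wB) * mB j = if j = j₀ then 1 else 0) :
    bprod Br θA θB (mA i₀) (mB j₀) = (θA.comp θB) (wA * wB)
    ∧ (∀ p : I × J,
        star (wA * wB) * bprod Br θA θB (mA p.1) (mB p.2)
          = star (bprod Br θA θB (mA p.1) (mB p.2)) * (wA * wB))
    ∧ (∀ p : I × J,
        star (wA * wB) * bprod Br θA θB (mA p.1) (mB p.2)
          = (star (wA * wB) * bprod Br θA θB (mA p.1) (mB p.2)) *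
              (star (wA * wB) * bprod Br θA θB (mA p.1) (mB p.2)))
    ∧ (∀ p : I × J,
        (θA.comp θB) (star (wA * wB)) * bprod Br θA θB (mA p.1) (mB p.2)
          = if p = (i₀, j₀) then 1 else 0) := by

  have hεu : star (Br.eps θA θB) * Br.eps θA θB = 1 := Br.unitary_left θA θB
  -- star wA ∈ Hom(θA, id)
  have hwA' : ∀ n : A, star wA * θA n = n * star wA := by
    intro n
    have h := congrArg star (hwA (star n))
    simpa [star_mul, map_star, star_star] using h.symm
  -- ε wA = θB wA
  have e1 : Br.eps θA θB * wA = θB wA := by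
    have h := Br.nat_left (idEnd A) θA θB wA (fun n => hwA n)
    simpa [Br.eps_id_left] using h
  -- ε θA(wB) = wB
  have e2 : Br.eps θA θB * θA wB = wB := by
    have h := Br.nat_right θA (idEnd A) θB wB (fun n => hwB n)
    simpa [Br.eps_id_right] using h
  -- θB(wA*) ε = wA*
  have s1 : θB (star wA) * Br.eps θA θB = star wA := by
    have h2 : star wA * star (Br.eps θA θB) = θB (star wA) := by
      have h := congrArg star e1
      simpa [star_mul, map_star] using h
    calc θB (star wA) * Br.eps θA θB
        = star wA * star (Br.eps θA θB) * Br.eps θA θB := by rw [h2]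
      _ = star wA := by rw [mul_assoc, hεu, mul_one]
  -- wB* ε = θA(wB*)
  have s2 : star wB * Br.eps θA θB = θA (star wB) := by
    have h2 : θA (star wB) * star (Br.eps θA θB) = star wB := by
      have h := congrArg star e2
      simpa [star_mul, map_star] using h
    calc star wB * Br.eps θA θB
        = θA (star wB) * star (Br.eps θA θB) * Br.eps θA θB := by rw [h2]
      _ = θA (star wB) := by rw [mul_assoc, hεu, mul_one]
  -- ε* wB = θA wB
  have e2' : star (Br.eps θA θB) * wB = θA wB := by
    have h := congrArg star s2
    simpa [star_mul, map_star, star_star] using h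
  -- wA* mA i ∈ Hom(θA, θA)
  have uAc : ∀ (i : I) (n : A),
      star wA * mA i * θA n = θA n * (star wA * mA i) := by
    intro i n
    calc star wA * mA i * θA n
        = star wA * (θA (θA n) * mA i) := by rw [mul_assoc, hmA]
      _ = star wA * θA (θA n) * mA i := by rw [mul_assoc]
      _ = θA n * star wA * mA i := by rw [hwA']
      _ = θA n * (star wA * mA i) := by rw [mul_assoc]
  -- right-associated versions
  have hwA'' : ∀ (n x : A), star wA * (θA n * x) = n * (star wA * x) := by
    intro n x; rw [← mul_assoc, hwA', mul_assoc]
  have hwAc : ∀ (n x : A), θA n * (wA * x) = wA * (n * x) := by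
    intro n x; rw [← mul_assoc, ← hwA, mul_assoc]
  have uAc' : ∀ (i : I) (n : A),
      star wA * (mA i * θA n) = θA n * (star wA * mA i) := by
    intro i n; rw [← mul_assoc, uAc]
  -- Key computation 1
  have K1 : ∀ (i : I) (j : J),
      star (wA * wB) * bprod Br θA θB (mA i) (mB j)
        = θA (star wB * mB j) * (star wA * mA i) := by
    intro i j
    calc star (wA * wB) * bprod Br θA θB (mA i) (mB j)
        = star wB * (star wA * (θA (Br.eps θA θB) * (mA i * θA (mB j)))) := by
          simp only [bprod, star_mul, mul_assoc]
      _ = star wB * (Br.eps θA θB * (star wA * (mA i * θA (mB j)))) := by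
          rw [hwA'']
      _ = star wB * (Br.eps θA θB * (θA (mB j) * (star wA * mA i))) := by
          rw [uAc']
      _ = star wB * Br.eps θA θB * (θA (mB j) * (star wA * mA i)) := by
          rw [mul_assoc]
      _ = θA (star wB) * (θA (mB j) * (star wA * mA i)) := by rw [s2]
      _ = θA (star wB) * θA (mB j) * (star wA * mA i) := by rw [mul_assoc]
      _ = θA (star wB * mB j) * (star wA * mA i) := by rw [← map_mul]
  -- Key computation 2
  have K2 : ∀ (i : I) (j : J),
      star (bprod Br θA θB (mA i) (mB j)) * (wA * wB)
        = θA (star wB * mB j) * (star wA * mA i) := by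
    intro i j
    calc star (bprod Br θA θB (mA i) (mB j)) * (wA * wB)
        = star (θA (mB j)) * (star (mA i) * (star (θA (Br.eps θA θB)) * (wA * wB))) := by
          simp only [bprod, star_mul, mul_assoc]
      _ = θA (star (mB j)) * (star (mA i) * (θA (star (Br.eps θA θB)) * (wA * wB))) := by
          simp only [← map_star]
      _ = θA (star (mB j)) * (star (mA i) * (wA * (star (Br.eps θA θB) * wB))) := by
          rw [hwAc]
      _ = θA (star (mB j)) * (star (mA i) * (wA * θA wB)) := by rw [e2']
      _ = θA (star (mB j)) * (star (mA i) * wA * θA wB) := by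
          rw [mul_assoc (star (mA i)) wA (θA wB)]
      _ = θA (star (mB j)) * (star wA * mA i * θA wB) := by rw [← hA₁]
      _ = θA (star (mB j)) * (θA wB * (star wA * mA i)) := by rw [uAc]
      _ = θA (star (mB j)) * θA wB * (star wA * mA i) := by rw [← mul_assoc]
      _ = θA (star (mB j) * wB) * (star wA * mA i) := by rw [← map_mul]
      _ = θA (star wB * mB j) * (star wA * mA i) := by rw [← hB₁]
  -- idempotency helper
  have sq : ∀ a b : A, b * a = a * b → a * a = a → b * b = b →
      (a * b) * (a * b) = a * b := by
    intro a b hc ha hb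
    calc (a * b) * (a * b) = a * ((b * a) * b) := by
          rw [mul_assoc a b (a * b), ← mul_assoc b a b]
      _ = a * ((a * b) * b) := by rw [hc]
      _ = (a * a) * (b * b) := by
          rw [← mul_assoc a (a * b) b, ← mul_assoc a a b, mul_assoc (a * a) b b]
      _ = a * b := by rw [ha, hb]
  -- statement 1
  have P1 : bprod Br θA θB (mA i₀) (mB j₀) = (θA.comp θB) (wA * wB) := by
    simp only [bprod, hA₀, hB₀]
    rw [← map_mul, ← map_mul, e1, ← map_mul]
    rfl
  -- statement 4 core
  have K4 : ∀ (i : I) (j : J),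
      (θA.comp θB) (star (wA * wB)) * bprod Br θA θB (mA i) (mB j)
        = (if i = i₀ then (1 : A) else 0) * θA (if j = j₀ then (1 : A) else 0) := by
    intro i j
    calc (θA.comp θB) (star (wA * wB)) * bprod Br θA θB (mA i) (mB j)
        = θA (θB (star wB) * (θB (star wA) * Br.eps θA θB)) * (mA i * θA (mB j)) := by
          simp only [bprod, star_mul, map_mul, StarAlgHom.comp_apply, mul_assoc]
      _ = θA (θB (star wB) * star wA) * (mA i * θA (mB j)) := by rw [s1]
      _ = θA (star wA * θA (θB (star wB))) * (mA i * θA (mB j)) := by rw [← hwA']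
      _ = θA (star wA) * (θA (θA (θB (star wB))) * (mA i * θA (mB j))) := by
          rw [map_mul, mul_assoc]
      _ = θA (star wA) * (θA (θA (θB (star wB))) * mA i * θA (mB j)) := by
          rw [mul_assoc]
      _ = θA (star wA) * (mA i * θA (θB (star wB)) * θA (mB j)) := by
          rw [← hmA]
      _ = θA (star wA) * mA i * (θA (θB (star wB)) * θA (mB j)) := by
          rw [mul_assoc (mA i), ← mul_assoc]
      _ = θA (star wA) * mA i * θA (θB (star wB) * mB j) := by rw [← map_mul]
      _ = (if i = i₀ then (1 : A) else 0) * θA (if j = j₀ then (1 : A) else 0) := by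
          rw [hA₃, hB₃]
  refine ⟨P1, fun p => (K1 p.1 p.2).trans (K2 p.1 p.2).symm, fun p => ?_, fun p => ?_⟩
  · rw [K1 p.1 p.2]
    exact (sq _ _ (uAc p.1 _) (by rw [← map_mul, ← hB₂]) (hA₂ p.1).symm).symm
  · obtain ⟨i, j⟩ := p
    rw [K4 i j]
    by_cases hi : i = i₀ <;> by_cases hj : j = j₀ <;>
      simp [hi, hj, Prod.ext_iff]
end
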